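/- arXiv:1501.02851 — 5 statements merged into one kernel-verified Lean document; each statement's English description precedes it below -/
import Mathlib

section
/- For every integer p ≥ 0, the sum ∑_{k=0}^p (-1)^k (2k+1) P_k(ξ) equals (-1)^p times the derivative of the right Radau polynomial R⁻_{p+1}(ξ) = P_{p+1}(ξ) - P_p(ξ), where P_k denotes the k-th Legendre polynomial. -/
open Polynomial intervalIntegral

/-!
Differentiating the Rodrigues formula `P_k = (2^k k!)⁻¹ D^k (X² - 1)^k` and using
`D² (X² - 1)^(n+2) = 2(n+2)(2n+3) (X² - 1)^(n+1) + 4(n+1)(n+2) (X² - 1)^n` gives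
`P'_{n+2} = P'_n + (2n+3) P_{n+1}`. Hence `(R⁻_{p+2})' = (2p+3) P_{p+1} - (R⁻_{p+1})'`,
which is exactly the recursion satisfied by `(-1)^p` times the alternating sum, starting from
`(R⁻_1)' = (X - 1)' = 1 = P_0`.
-/

/-- The `k`-th Legendre polynomial, defined via the Rodrigues formula. -/
noncomputable def leg (k : ℕ) : Polynomial ℝ :=
  C (1 / (2 ^ k * (k.factorial : ℝ))) * (fun q => derivative q)^[k] ((X ^ 2 - 1) ^ k)

/-- The right Radau polynomial `R⁻_{p+1} = P_{p+1} - P_p`. -/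
noncomputable def radau (p : ℕ) : Polynomial ℝ := leg (p + 1) - leg p

section

variable {R : Type*} [CommRing R]

theorem derivative_X_sq_sub_one_pow_succ (k : ℕ) :
    derivative ((X ^ 2 - 1 : R[X]) ^ (k + 1)) = C (2 * (k + 1) : R) * X * (X ^ 2 - 1) ^ k := by
  rw [derivative_pow_succ, derivative_sub, derivative_X_sq, derivative_one, sub_zero]
  simp only [C_mul, C_add, C_1, map_ofNat, map_natCast]
  ring

theorem derivative_derivative_X_sq_sub_one_pow_add_two (m : ℕ) :
    derivative (derivative ((X ^ 2 - 1 : R[X]) ^ (m + 2))) =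
      C (2 * (m + 2) * (2 * m + 3) : R) * (X ^ 2 - 1) ^ (m + 1) +
        C (4 * (m + 1) * (m + 2) : R) * (X ^ 2 - 1) ^ m := by
  rw [derivative_X_sq_sub_one_pow_succ, derivative_mul, derivative_C_mul_X,
    derivative_X_sq_sub_one_pow_succ]
  simp only [C_mul, C_add, C_1, map_ofNat, map_natCast, Nat.cast_add, Nat.cast_one]
  ring

end

theorem leg_zero : leg 0 = 1 := by
  simp [leg]

theorem leg_one : leg 1 = X := by
  simp only [leg, Function.iterate_one, pow_one, derivative_sub, derivative_X_sq,
    derivative_one, sub_zero, Nat.factorial_one]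
  rw [← mul_assoc, ← C_mul]
  norm_num

theorem derivative_leg (k : ℕ) :
    derivative (leg k) =
      C (1 / (2 ^ k * (k.factorial : ℝ))) * derivative^[k + 1] ((X ^ 2 - 1) ^ k) := by
  rw [leg, derivative_C_mul, Function.iterate_succ_apply']

theorem derivative_leg_add_two (n : ℕ) :
    derivative (leg (n + 2)) = derivative (leg n) + C (2 * n + 3 : ℝ) * leg (n + 1) := by
  have hcoeff₁ : 1 / (2 ^ (n + 2) * ((n + 2).factorial : ℝ)) * (2 * (n + 2) * (2 * n + 3)) =
      (2 * n + 3) * (1 / (2 ^ (n + 1) * ((n + 1).factorial : ℝ))) := by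
    simp only [Nat.factorial_succ]
    push_cast
    field_simp
    ring
  have hcoeff₂ : 1 / (2 ^ (n + 2) * ((n + 2).factorial : ℝ)) * (4 * (n + 1) * (n + 2)) =
      1 / (2 ^ n * (n.factorial : ℝ)) := by
    simp only [Nat.factorial_succ]
    push_cast
    field_simp
    ring
  rw [derivative_leg, derivative_leg, leg, show n + 2 + 1 = n + 1 + 2 by ring,
    Function.iterate_add_apply]
  have hD2 : derivative^[2] ((X ^ 2 - 1 : ℝ[X]) ^ (n + 2)) = _ :=
    derivative_derivative_X_sq_sub_one_pow_add_two n
  rw [hD2, iterate_map_add, iterate_derivative_C_mul, iterate_derivative_C_mul,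
    mul_add, ← mul_assoc, ← mul_assoc, ← C_mul, ← C_mul, hcoeff₁, hcoeff₂, C_mul]
  ring

theorem derivative_radau_zero : derivative (radau 0) = 1 := by
  simp [radau, leg_zero, leg_one]

theorem derivative_radau_succ (p : ℕ) :
    derivative (radau (p + 1)) = C (2 * p + 3 : ℝ) * leg (p + 1) - derivative (radau p) := by
  simp only [radau, derivative_sub, derivative_leg_add_two]
  ring

theorem sum_alt_legendre_eq_radau_deriv (p : ℕ) :
    ∑ k ∈ Finset.range (p + 1), C ((-1 : ℝ) ^ k * (2 * k + 1)) * leg k =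
      C ((-1 : ℝ) ^ p) * derivative (radau p) := by
  induction p with
  | zero => simp [derivative_radau_zero, leg_zero]
  | succ p ih =>
    rw [Finset.sum_range_succ, ih, derivative_radau_succ]
    simp only [C_mul, C_add, C_neg, C_pow, C_1, map_ofNat, map_natCast, Nat.cast_add, Nat.cast_one]
    ring
end

section
/- For each k with 1 ≤ k ≤ p, the k-th iterated antiderivative of the right Radau polynomial vanishes at ξ = 1: R⁻⁽⁻ᵏ⁾_{p+1}(1) = (1/(k-1)!) ∫_{-1}^1 (1-s)^{k-1} R⁻_{p+1}(s) ds = 0. -/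
/-!
Rodrigues' formula and `n` integrations by parts, whose boundary terms vanish because the first
`n - 1` derivatives of `(x² - 1)ⁿ` vanish at `±1`, make `P_n` orthogonal to every polynomial of
degree `< n`, so `R⁻_{p+1}` is orthogonal to every polynomial of degree `< p`. Cauchy's formula for
repeated integration turns `R⁻⁽⁻ᵏ⁾_{p+1}(1)` into `(1/(k-1)!) ∫ (1 - s)^{k-1} R⁻_{p+1}(s) ds`, an
orthogonality integral against a polynomial of degree `k - 1 < p`.
-/

open Polynomial intervalIntegral

/-- Iterated antiderivatives of the right Radau polynomial, with base point `-1`. -/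
noncomputable def radauIter (p : ℕ) : ℕ → ℝ → ℝ
  | 0 => fun ξ => (radau p).eval ξ
  | (k + 1) => fun ξ => ∫ s in (-1 : ℝ)..ξ, radauIter p k s

open scoped Nat

theorem Polynomial.eval_iterate_derivative_pow_eq_zero {R : Type*} [CommRing R] {q : R[X]} {x : R}
    (hx : q.IsRoot x) {i n : ℕ} (hi : i < n) : (derivative^[i] (q ^ n)).eval x = 0 := by
  have := eval_dvd (x := x) (pow_sub_dvd_iterate_derivative_pow q n i)
  rwa [eval_pow, hx.eq_zero, zero_pow (by omega), zero_dvd_iff] at this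

theorem Polynomial.integral_eval_mul_iterate_derivative {a b : ℝ} (f g : ℝ[X]) (n : ℕ)
    (hf : ∀ i < n, (derivative^[i] f).eval a = 0 ∧ (derivative^[i] f).eval b = 0) :
    ∫ x in a..b, g.eval x * (derivative^[n] f).eval x
      = (-1) ^ n * ∫ x in a..b, (derivative^[n] g).eval x * f.eval x := by
  induction n generalizing g with
  | zero => simp
  | succ n ih =>
    obtain ⟨ha, hb⟩ := hf n n.lt_succ_self
    rw [Function.iterate_succ_apply',
      integral_mul_deriv_eq_deriv_mul (fun x _ => g.hasDerivAt x)
        (fun x _ => (derivative^[n] f).hasDerivAt x)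
        ((derivative g).continuous.intervalIntegrable _ _)
        ((derivative (derivative^[n] f)).continuous.intervalIntegrable _ _),
      ha, hb, ih (derivative g) fun i hi => hf i (by omega), Function.iterate_succ_apply]
    ring

theorem integral_eval_mul_leg_eq_zero {n : ℕ} {q : ℝ[X]} (hq : q.natDegree < n) :
    ∫ x in (-1 : ℝ)..1, q.eval x * (leg n).eval x = 0 := by
  have hroot (x : ℝ) (hx : x ^ 2 = 1) : (X ^ 2 - 1 : ℝ[X]).IsRoot x := by simp [hx]
  have hibp := integral_eval_mul_iterate_derivative (a := -1) (b := 1) ((X ^ 2 - 1) ^ n) q n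
    fun i hi => ⟨eval_iterate_derivative_pow_eq_zero (hroot _ (by norm_num)) hi,
      eval_iterate_derivative_pow_eq_zero (hroot _ (by norm_num)) hi⟩
  simp only [leg, eval_mul, eval_C, mul_left_comm (q.eval _), integral_const_mul]
  rw [hibp, iterate_derivative_eq_zero hq]
  simp

theorem integral_eval_mul_radau_eq_zero {p : ℕ} {q : ℝ[X]} (hq : q.natDegree < p) :
    ∫ x in (-1 : ℝ)..1, q.eval x * (radau p).eval x = 0 := by
  simp only [radau, eval_sub, mul_sub]
  rw [integral_sub, integral_eval_mul_leg_eq_zero (by omega), integral_eval_mul_leg_eq_zero hq,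
    sub_zero]
  all_goals exact (q.continuous.mul (leg _).continuous).intervalIntegrable _ _

theorem iterated_primitive_eq_integral_pow_mul {F : ℕ → ℝ → ℝ} {a b : ℝ}
    (hF₀ : Continuous (F 0)) (hF : ∀ k x, HasDerivAt (F (k + 1)) (F k x) x)
    (ha : ∀ k, F (k + 1) a = 0) (n : ℕ) :
    F (n + 1) b = 1 / n ! * ∫ s in a..b, (b - s) ^ n * F 0 s := by
  induction n generalizing F with
  | zero =>
    simp only [Nat.factorial_zero, Nat.cast_one, div_one, pow_zero, one_mul]
    rw [integral_eq_sub_of_hasDerivAt (fun x _ => hF 0 x) (hF₀.intervalIntegrable _ _), ha,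
      sub_zero]
  | succ n ih =>
    have hF₁ : Continuous (F 1) :=
      (show Differentiable ℝ (F 1) from fun x => (hF 0 x).differentiableAt).continuous
    rw [ih (F := fun k => F (k + 1)) hF₁ (fun k => hF (k + 1)) (fun k => ha (k + 1))]
    have hu (x : ℝ) : HasDerivAt (fun s => -(b - s) ^ (n + 1) / (n + 1)) ((b - x) ^ n) x := by
      refine (((hasDerivAt_id' x).const_sub b).pow (n + 1)).neg.div_const ((n : ℝ) + 1)
        |>.congr_deriv ?_
      rw [Nat.add_sub_cancel]
      field_simp
      push_cast
      ring
    have hibp : ∫ s in a..b, (b - s) ^ n * F 1 s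
        = 1 / (n + 1) * ∫ s in a..b, (b - s) ^ (n + 1) * F 0 s := by
      have ibp := integral_mul_deriv_eq_deriv_mul (a := a) (b := b) (fun x _ => hu x)
        (fun x _ => hF 0 x) ((continuous_const.sub continuous_id).pow n |>.intervalIntegrable _ _)
        (hF₀.intervalIntegrable _ _)
      simp only [zero_add, sub_self, ha 0, zero_pow n.succ_ne_zero, neg_zero, zero_div, zero_mul,
        mul_zero, zero_sub, neg_div, neg_mul, integral_neg, neg_inj] at ibp
      rw [← ibp, ← integral_const_mul]
      congr 1
      ext s
      ring
    rw [hibp, Nat.factorial_succ]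
    push_cast
    field_simp

theorem continuous_radauIter (p k : ℕ) : Continuous (radauIter p k) := by
  induction k with
  | zero => exact (radau p).continuous
  | succ k ih => exact continuous_primitive (fun a b => ih.intervalIntegrable a b) (-1)

theorem radauIter_succ_eval_one (p n : ℕ) :
    radauIter p (n + 1) 1 = 1 / n ! * ∫ s in (-1 : ℝ)..1, (1 - s) ^ n * (radau p).eval s :=
  iterated_primitive_eq_integral_pow_mul (continuous_radauIter p 0)
    (fun k x => (continuous_radauIter p k).integral_hasStrictDerivAt (-1) x |>.hasDerivAt)
    (fun _ => integral_same) n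

theorem radauIter_eval_one_eq_zero (p k : ℕ) (hk1 : 1 ≤ k) (hkp : k ≤ p) :
    radauIter p k 1 = 0 ∧
      (1 / ((k - 1).factorial : ℝ)) *
          (∫ s in (-1 : ℝ)..1, (1 - s) ^ (k - 1) * (radau p).eval s) = 0 := by
  obtain ⟨n, rfl⟩ : ∃ n, k = n + 1 := ⟨k - 1, by omega⟩
  have hdeg : ((1 - X : ℝ[X]) ^ n).natDegree < p :=
    (natDegree_pow_le_of_le (m := 1) n ((natDegree_sub_le _ _).trans (by simp))).trans_lt
      (by omega)
  have horth : ∫ s in (-1 : ℝ)..1, (1 - s) ^ n * (radau p).eval s = 0 := by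
    simpa using integral_eval_mul_radau_eq_zero hdeg
  simp only [Nat.add_sub_cancel, radauIter_succ_eval_one, horth, mul_zero, and_self]
end

section
/- For any z ∈ ℂ and ξ ∈ [-1,1], the integral of the derivative of the right Radau polynomial against the exponential kernel satisfies ((-1)^{p+1}/2) ∫_{-1}^ξ e^{(z/2)(ξ-s)} (R⁻_{p+1})'(s) ds = −e^{(z/2)(ξ+1)} + ((-1)^{p+1}/2) ∑_{k=0}^∞ (z/2)^k R⁻⁽⁻ᵏ⁾_{p+1}(ξ), where the series converges absolutely. -/
open Polynomial intervalIntegral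

/-! Integrating by parts against the kernel `e^{c(x-s)}` trades one primitive for one factor
of `c`: `∫ₐˣ e^{c(x-s)} Iⁿf = Iⁿ⁺¹f(x) + c ∫ₐˣ e^{c(x-s)} Iⁿ⁺¹f`, where `Iⁿf` is the `n`-fold
primitive of `f` vanishing at `a`. Iterating, the partial sums of `∑ cᵏ Iᵏf(x)` differ from
`f(x) + c ∫ₐˣ e^{c(x-s)} f(s) ds` by a remainder of size `O((|c|(x-a))ⁿ/n!)`, so the series sums
to that value. One more integration by parts, against `R'` with `R(-1) = 2(-1)^{p+1}`, turns this
into the stated identity for the Radau polynomial `R`. -/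

theorem Polynomial.eval_iterate_derivative_X_sub_C_pow_mul {R : Type*} [CommRing R] (r : R)
    (k : ℕ) (q : R[X]) : (derivative^[k] ((X - C r) ^ k * q)).eval r = k.factorial * q.eval r := by
  rw [iterate_derivative_mul, eval_finsetSum, Finset.sum_eq_single 0]
  · simp [iterate_derivative_X_sub_pow_self]
  · intro j hj hj0
    have : k - (k - j) ≠ 0 := by rw [Finset.mem_range] at hj; omega
    rw [iterate_derivative_X_sub_pow, eval_smul, eval_mul, eval_smul, eval_pow, eval_sub, eval_X,
      eval_C, sub_self, zero_pow this]
    simp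
  · simp

theorem leg_eval_neg_one (k : ℕ) : (leg k).eval (-1) = (-1) ^ k := by
  have hsplit : ((X : ℝ[X]) ^ 2 - 1) ^ k = (X - C (-1)) ^ k * (X - C 1) ^ k := by
    rw [← mul_pow]; simp only [map_neg, C_1]; ring
  change (C _ * derivative^[k] _).eval (-1 : ℝ) = _
  rw [eval_mul, eval_C, hsplit, eval_iterate_derivative_X_sub_C_pow_mul]
  have : (2 : ℝ) ^ k * k.factorial ≠ 0 := by positivity
  simp only [eval_pow, eval_sub, eval_X, eval_C]
  field_simp
  rw [show (-1 - 1 : ℝ) = -1 * 2 by norm_num, mul_pow, mul_comm]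

theorem radau_eval_neg_one (p : ℕ) : (radau p).eval (-1) = 2 * (-1) ^ (p + 1) := by
  rw [radau, eval_sub, leg_eval_neg_one, leg_eval_neg_one]
  ring

noncomputable def iteratedPrimitive (f : ℝ → ℝ) (a : ℝ) : ℕ → ℝ → ℝ
  | 0 => f
  | k + 1 => fun x => ∫ s in a..x, iteratedPrimitive f a k s

section IteratedPrimitive

open Complex Filter Topology

variable {f : ℝ → ℝ} {a x : ℝ}

@[simp]
theorem iteratedPrimitive_zero : iteratedPrimitive f a 0 = f := rfl

@[simp]
theorem iteratedPrimitive_succ_self (k : ℕ) : iteratedPrimitive f a (k + 1) a = 0 :=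
  integral_same

theorem continuous_iteratedPrimitive (hf : Continuous f) (k : ℕ) :
    Continuous (iteratedPrimitive f a k) := by
  induction k with
  | zero => exact hf
  | succ k ih => exact continuous_primitive (fun _ _ => ih.intervalIntegrable _ _) a

theorem hasDerivAt_iteratedPrimitive_succ (hf : Continuous f) (k : ℕ) (x : ℝ) :
    HasDerivAt (iteratedPrimitive f a (k + 1)) (iteratedPrimitive f a k x) x :=
  ((continuous_iteratedPrimitive hf k).integral_hasStrictDerivAt a x).hasDerivAt

theorem integral_sub_pow_div_factorial (a t : ℝ) (k : ℕ) :
    ∫ s in a..t, (s - a) ^ k / k.factorial = (t - a) ^ (k + 1) / (k + 1).factorial := by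
  rw [integral_div, integral_comp_sub_right (fun s => s ^ k), integral_pow, sub_self,
    zero_pow k.succ_ne_zero, sub_zero, Nat.factorial_succ, Nat.cast_mul, div_div, Nat.cast_succ]

theorem norm_iteratedPrimitive_le (hf : Continuous f) {b M : ℝ}
    (hM : ∀ s ∈ Set.Icc a b, ‖f s‖ ≤ M) (k : ℕ) :
    ∀ t ∈ Set.Icc a b, ‖iteratedPrimitive f a k t‖ ≤ M * (t - a) ^ k / k.factorial := by
  induction k with
  | zero => simpa using hM
  | succ k ih =>
    rintro t ⟨hat, htb⟩
    calc ‖iteratedPrimitive f a (k + 1) t‖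
        ≤ ∫ s in a..t, ‖iteratedPrimitive f a k s‖ := norm_integral_le_integral_norm hat
      _ ≤ ∫ s in a..t, M * ((s - a) ^ k / k.factorial) := by
        have hbound : Continuous fun s : ℝ => M * ((s - a) ^ k / k.factorial) := by fun_prop
        refine integral_mono_on hat
          ((continuous_iteratedPrimitive hf k).norm.intervalIntegrable _ _)
          (hbound.intervalIntegrable _ _) fun s hs => ?_
        rw [← mul_div_assoc]
        exact ih s ⟨hs.1, hs.2.trans htb⟩
      _ = M * (t - a) ^ (k + 1) / (k + 1).factorial := by
        rw [integral_const_mul, integral_sub_pow_div_factorial, mul_div_assoc]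

theorem integral_cexp_mul_deriv_eq (c : ℂ) {F : ℝ → ℝ}
    (hF : ∀ s ∈ Set.uIcc a x, HasDerivAt F (f s) s)
    (hf : IntervalIntegrable f MeasureTheory.volume a x) :
    ∫ s in a..x, cexp (c * (x - s)) * (f s : ℂ) =
      F x - cexp (c * (x - a)) * F a + c * ∫ s in a..x, cexp (c * (x - s)) * (F s : ℂ) := by
  have hkernel (s : ℝ) :
      HasDerivAt (fun s : ℝ => cexp (c * (x - s))) (-c * cexp (c * (x - s))) s :=
    ((((hasDerivAt_id' s).ofReal_comp).const_sub (x : ℂ)).const_mul c).cexp.congr_deriv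
      (by push_cast; ring)
  have hkernel_cont : Continuous fun s : ℝ => -c * cexp (c * (x - s)) := by fun_prop
  rw [integral_mul_deriv_eq_deriv_mul (fun s _ => hkernel s) (fun s hs => (hF s hs).ofReal_comp)
    (hkernel_cont.intervalIntegrable _ _) ⟨hf.1.ofReal, hf.2.ofReal⟩]
  simp only [sub_self, mul_zero, Complex.exp_zero, one_mul, neg_mul, integral_neg, mul_assoc,
    integral_const_mul]
  ring

theorem sum_range_succ_pow_mul_iteratedPrimitive (hf : Continuous f) (c : ℂ) (n : ℕ) :
    ∑ k ∈ Finset.range (n + 1), c ^ k * (iteratedPrimitive f a k x : ℂ) =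
      f x + c * (∫ s in a..x, cexp (c * (x - s)) * (f s : ℂ)) -
        c ^ (n + 1) * ∫ s in a..x, cexp (c * (x - s)) * (iteratedPrimitive f a n s : ℂ) := by
  induction n with
  | zero => simp
  | succ n ih =>
    have hparts := integral_cexp_mul_deriv_eq c (a := a) (x := x)
      (fun s _ => hasDerivAt_iteratedPrimitive_succ (a := a) hf n s)
      ((continuous_iteratedPrimitive hf n).intervalIntegrable a x)
    rw [Finset.sum_range_succ, ih, hparts, iteratedPrimitive_succ_self, ofReal_zero]
    ring

theorem norm_integral_cexp_mul_iteratedPrimitive_le (hf : Continuous f) (c : ℂ) (hax : a ≤ x)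
    {M : ℝ} (hM : ∀ s ∈ Set.Icc a x, ‖f s‖ ≤ M) (n : ℕ) :
    ‖∫ s in a..x, cexp (c * (x - s)) * (iteratedPrimitive f a n s : ℂ)‖ ≤
      Real.exp (‖c‖ * (x - a)) * (M * (x - a) ^ n / n.factorial) * (x - a) := by
  have hM0 : 0 ≤ M := (norm_nonneg _).trans (hM x ⟨hax, le_rfl⟩)
  refine (norm_integral_le_of_norm_le_const fun s hs => ?_).trans_eq
    (by rw [abs_of_nonneg (sub_nonneg.2 hax)])
  rw [Set.uIoc_of_le hax] at hs
  rw [norm_mul, norm_real]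
  gcongr
  · calc ‖cexp (c * (x - s))‖ ≤ Real.exp ‖c * (x - s)‖ := norm_exp_le_exp_norm _
      _ ≤ Real.exp (‖c‖ * (x - a)) := by
        rw [norm_mul, ← ofReal_sub, norm_real, Real.norm_of_nonneg (by linarith [hs.2])]
        gcongr
        linarith [hs.1]
  · calc ‖iteratedPrimitive f a n s‖ ≤ M * (s - a) ^ n / n.factorial :=
          norm_iteratedPrimitive_le hf hM n s ⟨hs.1.le, hs.2⟩
      _ ≤ M * (x - a) ^ n / n.factorial := by
        gcongr
        · linarith [hs.1]
        · exact hs.2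

theorem tendsto_pow_mul_integral_cexp_mul_iteratedPrimitive (hf : Continuous f) (c : ℂ)
    (hax : a ≤ x) :
    Tendsto (fun n => c ^ (n + 1) *
      ∫ s in a..x, cexp (c * (x - s)) * (iteratedPrimitive f a n s : ℂ)) atTop (𝓝 0) := by
  obtain ⟨M, hM⟩ := isCompact_Icc.exists_bound_of_continuousOn (hf.continuousOn (s := Set.Icc a x))
  have hbound (n : ℕ) : ‖c ^ (n + 1) *
      ∫ s in a..x, cexp (c * (x - s)) * (iteratedPrimitive f a n s : ℂ)‖ ≤
      ‖c‖ * Real.exp (‖c‖ * (x - a)) * M * (x - a) * ((‖c‖ * (x - a)) ^ n / n.factorial) := by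
    rw [norm_mul, norm_pow]
    calc ‖c‖ ^ (n + 1) * ‖∫ s in a..x, cexp (c * (x - s)) * (iteratedPrimitive f a n s : ℂ)‖
        ≤ ‖c‖ ^ (n + 1) *
            (Real.exp (‖c‖ * (x - a)) * (M * (x - a) ^ n / n.factorial) * (x - a)) := by
          gcongr
          exact norm_integral_cexp_mul_iteratedPrimitive_le hf c hax hM n
      _ = _ := by rw [mul_pow]; ring
  refine squeeze_zero_norm hbound ?_
  simpa using (FloorSemiring.tendsto_pow_div_factorial_atTop (‖c‖ * (x - a))).const_mul
    (‖c‖ * Real.exp (‖c‖ * (x - a)) * M * (x - a))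

theorem summable_norm_pow_mul_iteratedPrimitive (hf : Continuous f) (c : ℂ) (hax : a ≤ x) :
    Summable fun k => ‖c ^ k * (iteratedPrimitive f a k x : ℂ)‖ := by
  obtain ⟨M, hM⟩ := isCompact_Icc.exists_bound_of_continuousOn (hf.continuousOn (s := Set.Icc a x))
  refine .of_nonneg_of_le (fun _ => norm_nonneg _) (fun k => ?_)
    ((Real.summable_pow_div_factorial (‖c‖ * (x - a))).mul_left M)
  rw [norm_mul, norm_pow, norm_real, mul_pow, mul_div_assoc', mul_left_comm, mul_div_assoc]
  gcongr
  simpa [mul_div_assoc] using norm_iteratedPrimitive_le hf hM k x ⟨hax, le_rfl⟩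

theorem hasSum_pow_mul_iteratedPrimitive (hf : Continuous f) (c : ℂ) (hax : a ≤ x) :
    HasSum (fun k => c ^ k * (iteratedPrimitive f a k x : ℂ))
      (f x + c * ∫ s in a..x, cexp (c * (x - s)) * (f s : ℂ)) := by
  rw [hasSum_iff_tendsto_nat_of_summable_norm (summable_norm_pow_mul_iteratedPrimitive hf c hax),
    ← tendsto_add_atTop_iff_nat 1]
  simp_rw [sum_range_succ_pow_mul_iteratedPrimitive hf c]
  simpa using tendsto_const_nhds.sub (tendsto_pow_mul_integral_cexp_mul_iteratedPrimitive hf c hax)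

end IteratedPrimitive

theorem radauIter_eq_iteratedPrimitive (p : ℕ) :
    radauIter p = iteratedPrimitive (fun x => (radau p).eval x) (-1) := by
  funext k
  induction k with
  | zero => rfl
  | succ k ih => funext x; simp only [radauIter, iteratedPrimitive, ih]

theorem radau_integral_series (p : ℕ) (z : ℂ) (ξ : ℝ) (hξ : ξ ∈ Set.Icc (-1 : ℝ) 1) :
    Summable (fun k : ℕ => ‖(z / 2) ^ k * (radauIter p k ξ : ℂ)‖) ∧
      ((-1 : ℂ) ^ (p + 1) / 2) *
          ∫ s in (-1 : ℝ)..ξ,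
            Complex.exp (z / 2 * (ξ - s)) * (((derivative (radau p)).eval s : ℝ) : ℂ) =
        -Complex.exp (z / 2 * (ξ + 1)) +
          ((-1 : ℂ) ^ (p + 1) / 2) * ∑' k : ℕ, (z / 2) ^ k * (radauIter p k ξ : ℂ) := by
  rw [radauIter_eq_iteratedPrimitive]
  have hR : Continuous fun x => (radau p).eval x := (radau p).continuous
  refine ⟨summable_norm_pow_mul_iteratedPrimitive hR _ hξ.1, ?_⟩
  rw [(hasSum_pow_mul_iteratedPrimitive hR _ hξ.1).tsum_eq,
    integral_cexp_mul_deriv_eq _ (fun s _ => (radau p).hasDerivAt s)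
      ((derivative (radau p)).continuous.intervalIntegrable _ _),
    radau_eval_neg_one]
  have hsign : ((-1 : ℂ) ^ (p + 1)) ^ 2 = 1 := by rw [← pow_mul, pow_mul']; simp
  push_cast [sub_neg_eq_add]
  linear_combination (-Complex.exp (z / 2 * (ξ + 1))) * hsign
end

section
/- The polynomials f and g satisfy f(0,1) = g(0) ≠ 0 and ∂f/∂z(0,1) ≠ g'(0); consequently z = 0 is a simple root of the polynomial g(z) − f(z,1). -/
open Polynomial intervalIntegral

/-- The numerator polynomial `f(z, 1)` arising from integration by parts of the Radau kernel. -/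
noncomputable def DGf (p : ℕ) : Polynomial ℂ :=
  C ((-1 : ℂ) ^ (p + 1) / 2) *
    ∑ k ∈ Finset.Icc 1 (p + 1),
      C ((2 : ℂ) ^ k * ((((fun q => derivative q)^[k] (radau p)).eval 1 : ℝ) : ℂ)) *
        X ^ (p + 1 - k)

/-- The denominator polynomial `g(z)` arising from integration by parts of the Radau kernel. -/
noncomputable def DGg (p : ℕ) : Polynomial ℂ :=
  X ^ (p + 1) +
    C ((-1 : ℂ) ^ (p + 1) / 2) *
      ∑ k ∈ Finset.Icc 1 (p + 1),
        C ((2 : ℂ) ^ k * ((((fun q => derivative q)^[k] (radau p)).eval (-1) : ℝ) : ℂ)) *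
          X ^ (p + 1 - k)

/-!
`R = radau p` has degree `p + 1` and its top coefficient comes from `P_{p+1}` alone, so it is
nonzero. Hence `R^{(p+1)}` is a nonzero constant `A`, and the linear polynomial `R^{(p)}` satisfies
`R^{(p)}(1) - R^{(p)}(-1) = 2A ≠ 0`. The constant terms of `f` and `g` both come from the `k = p + 1`
summand, `(-1)^{p+1} 2^p A`, which is therefore the same nonzero number. Their linear coefficients come
from the `k = p` summand and differ by a nonzero multiple of `R^{(p)}(1) - R^{(p)}(-1)`; for `p = 0`
there is no such summand and the `z^{p+1}` term of `g` makes them differ instead. So `g - f` vanishes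
at `0` with nonzero derivative.
-/

open scoped Nat

section

variable {R : Type*} [CommRing R]

theorem eval_zero_derivative (q : R[X]) : (derivative q).eval 0 = q.coeff 1 := by
  simp [← coeff_zero_eq_eval_zero, coeff_derivative]

theorem rootMultiplicity_eq_one_of_isRoot_of_not_isRoot_derivative {q : R[X]} {t : R} (h0 : q.IsRoot t)
    (h1 : ¬(derivative q).IsRoot t) : q.rootMultiplicity t = 1 := by
  have hq : q ≠ 0 := by rintro rfl; simp at h1
  have hpos := (rootMultiplicity_pos hq).mpr h0
  have hle : ¬1 < q.rootMultiplicity t := fun h =>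
    h1 ((one_lt_rootMultiplicity_iff_isRoot hq).mp h).2
  omega

theorem iterate_derivative_eq_C_of_natDegree_le {q : R[X]} {n : ℕ} (hq : q.natDegree ≤ n) :
    derivative^[n] q = C ((n ! : R) * q.coeff n) := by
  have hd : (derivative^[n] q).natDegree ≤ 0 := (natDegree_iterate_derivative q n).trans (by omega)
  rw [eq_C_of_natDegree_le_zero hd, coeff_iterate_derivative, zero_add, Nat.descFactorial_self,
    nsmul_eq_mul]

theorem eval_one_sub_eval_neg_one_iterate_derivative {q : R[X]} {n : ℕ}
    (hq : q.natDegree ≤ n + 1) :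
    (derivative^[n] q).eval 1 - (derivative^[n] q).eval (-1) =
      2 * (((n + 1)! : R) * q.coeff (n + 1)) := by
  have hd : (derivative^[n] q).natDegree ≤ 1 := (natDegree_iterate_derivative q n).trans (by omega)
  have hfac : (n + 1).descFactorial n = (n + 1)! := by
    simpa using Nat.factorial_mul_descFactorial (Nat.le_succ n)
  rw [eq_X_add_C_of_natDegree_le_one hd]
  simp only [eval_add, eval_mul, eval_C, eval_X, coeff_iterate_derivative, nsmul_eq_mul]
  rw [Nat.add_comm 1 n, hfac]
  ring

end

theorem coeff_sum_Icc_C_mul_X_pow {R : Type*} [Semiring R] (a : ℕ → R) (n j : ℕ) :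
    (∑ k ∈ Finset.Icc 1 n, C (a k) * X ^ (n - k)).coeff j = if j < n then a (n - j) else 0 := by
  rw [finsetSum_coeff]
  simp only [coeff_C_mul_X_pow]
  split_ifs with hj
  · rw [Finset.sum_eq_single (n - j)]
    · rw [if_pos (by omega)]
    · intro k hk hne
      simp only [Finset.mem_Icc] at hk
      rw [if_neg (by omega)]
    · intro h; exact absurd (Finset.mem_Icc.mpr ⟨by omega, by omega⟩) h
  · refine Finset.sum_eq_zero fun k hk => ?_
    simp only [Finset.mem_Icc] at hk
    rw [if_neg (by omega)]

theorem natDegree_X_sq_sub_one : ((X : ℝ[X]) ^ 2 - 1).natDegree = 2 := by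
  simpa using natDegree_X_pow_sub_C (n := 2) (r := (1 : ℝ))

theorem natDegree_leg_le (n : ℕ) : (leg n).natDegree ≤ n := by
  refine (natDegree_C_mul_le _ _).trans <| (natDegree_iterate_derivative _ _).trans ?_
  have : (((X : ℝ[X]) ^ 2 - 1) ^ n).natDegree ≤ n * 2 :=
    natDegree_pow_le_of_le n natDegree_X_sq_sub_one.le
  omega

theorem coeff_leg_self_ne_zero (n : ℕ) : (leg n).coeff n ≠ 0 := by
  have hmonic : ((X : ℝ[X]) ^ 2 - 1).Monic := by simpa using monic_X_pow_sub_C (1 : ℝ) two_ne_zero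
  have hlead : (((X : ℝ[X]) ^ 2 - 1) ^ n).coeff (n + n) = 1 := by
    have := (hmonic.pow n).coeff_natDegree
    rwa [hmonic.natDegree_pow, natDegree_X_sq_sub_one, Nat.mul_two] at this
  rw [leg, coeff_C_mul, coeff_iterate_derivative, hlead, nsmul_eq_mul, mul_one]
  have : (n + n).descFactorial n ≠ 0 := by
    rw [Ne, Nat.descFactorial_eq_zero_iff_lt]; omega
  positivity

theorem natDegree_radau_le (p : ℕ) : (radau p).natDegree ≤ p + 1 :=
  (natDegree_sub_le _ _).trans (max_le (natDegree_leg_le _) ((natDegree_leg_le p).trans p.le_succ))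

theorem coeff_radau_succ_ne_zero (p : ℕ) : (radau p).coeff (p + 1) ≠ 0 := by
  rw [radau, coeff_sub, coeff_eq_zero_of_natDegree_lt ((natDegree_leg_le p).trans_lt p.lt_succ_self),
    sub_zero]
  exact coeff_leg_self_ne_zero _

theorem iterate_derivative_radau_eval_one_ne (p : ℕ) :
    (derivative^[p] (radau p)).eval 1 ≠ (derivative^[p] (radau p)).eval (-1) := by
  rw [← sub_ne_zero, eval_one_sub_eval_neg_one_iterate_derivative (natDegree_radau_le p)]
  have := coeff_radau_succ_ne_zero p
  positivity

theorem coeff_DGf (p j : ℕ) :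
    (DGf p).coeff j = (-1) ^ (p + 1) / 2 * if j < p + 1 then
      2 ^ (p + 1 - j) * (((derivative^[p + 1 - j] (radau p)).eval 1 : ℝ) : ℂ) else 0 := by
  rw [DGf, coeff_C_mul, coeff_sum_Icc_C_mul_X_pow]

theorem coeff_DGg (p j : ℕ) :
    (DGg p).coeff j = (if j = p + 1 then 1 else 0) + (-1) ^ (p + 1) / 2 * if j < p + 1 then
      2 ^ (p + 1 - j) * (((derivative^[p + 1 - j] (radau p)).eval (-1) : ℝ) : ℂ) else 0 := by
  rw [DGg, coeff_add, coeff_X_pow, coeff_C_mul, coeff_sum_Icc_C_mul_X_pow]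

theorem DG_simple_root_at_zero (p : ℕ) :
    (DGf p).eval 0 = (DGg p).eval 0 ∧ (DGg p).eval 0 ≠ 0 ∧
      (derivative (DGf p)).eval 0 ≠ (derivative (DGg p)).eval 0 ∧
      (DGg p - DGf p).rootMultiplicity 0 = 1 := by
  set A : ℝ := (p + 1)! * (radau p).coeff (p + 1)
  have hA : A ≠ 0 := mul_ne_zero (by positivity) (coeff_radau_succ_ne_zero p)
  have htop : derivative^[p + 1] (radau p) = C A :=
    iterate_derivative_eq_C_of_natDegree_le (natDegree_radau_le p)
  have hf0 : (DGf p).eval 0 = (-1) ^ (p + 1) / 2 * (2 ^ (p + 1) * (A : ℂ)) := by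
    simp [← coeff_zero_eq_eval_zero, coeff_DGf, htop]
  have hg0 : (DGg p).eval 0 = (-1) ^ (p + 1) / 2 * (2 ^ (p + 1) * (A : ℂ)) := by
    simp [← coeff_zero_eq_eval_zero, coeff_DGg, htop]
  have h1 : (derivative (DGf p)).eval 0 ≠ (derivative (DGg p)).eval 0 := by
    rw [eval_zero_derivative, eval_zero_derivative, coeff_DGf, coeff_DGg]
    rcases p with _ | p
    · simp
    · simpa using iterate_derivative_radau_eval_one_ne (p + 1)
  refine ⟨hf0.trans hg0.symm, by simp [hg0, hA], h1,
    rootMultiplicity_eq_one_of_isRoot_of_not_isRoot_derivative (by simp [hf0, hg0]) ?_⟩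
  rw [IsRoot.def, derivative_sub, eval_sub]
  exact sub_ne_zero.mpr h1.symm
end

section
/- Let P(z)/Q(z) be the p/(p+1) Padé approximant of e^z with Q(0) = 1. Then the polynomial Q(z) − P(z) has exactly one root at z = 0 (simple), and its p remaining roots all have strictly positive real part. -/
open Polynomial

/-- Numerator of the `p/(p+1)` Padé approximant of `e^z`. -/
noncomputable def padeP (p : ℕ) : Polynomial ℂ :=
  ∑ j ∈ Finset.range (p + 1),
    C (((p.factorial * (2 * p + 1 - j).factorial : ℕ) : ℂ) /
        (((2 * p + 1).factorial * j.factorial * (p - j).factorial : ℕ) : ℂ)) * X ^ j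

/-- Denominator of the `p/(p+1)` Padé approximant of `e^z`, normalized so `Q(0) = 1`. -/
noncomputable def padeQ (p : ℕ) : Polynomial ℂ :=
  ∑ j ∈ Finset.range (p + 2),
    C ((((p + 1).factorial * (2 * p + 1 - j).factorial : ℕ) : ℂ) /
        (((2 * p + 1).factorial * j.factorial * (p + 1 - j).factorial : ℕ) : ℂ)) * (-X) ^ j

namespace PadeAux

noncomputable def w (q k : ℕ) : ℂ :=
  if 2 * k + 1 ≤ q then
    ((2 * q.factorial * (2 * q - 2 * k - 1).factorial : ℕ) : ℂ) /
      (((2 * q).factorial * (2 * k + 1).factorial * (q - 2 * k - 1).factorial : ℕ) : ℂ)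
  else 0

noncomputable def W : ℕ → Polynomial ℂ
  | 0 => 0
  | 1 => 1
  | (n+2) => W (n+1) + C (((4*(2*n+1)*(2*n+3) : ℕ) : ℂ))⁻¹ * X * W n

lemma fact_ne (n : ℕ) : ((n.factorial : ℕ) : ℂ) ≠ 0 :=
  Nat.cast_ne_zero.mpr n.factorial_ne_zero

lemma nat_ne (n : ℕ) (h : n ≠ 0) : ((n : ℕ) : ℂ) ≠ 0 := Nat.cast_ne_zero.mpr h

lemma w_zero (b : ℕ) : w (b+1) 0 = 1 := by
  rw [w, if_pos (by omega)]
  rw [show 2*(b+1)-2*0-1 = 2*b+1 from by omega]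
  rw [show b+1-2*0-1 = b from by omega]
  rw [show 2*(b+1) = (2*b+1)+1 from by omega]
  rw [Nat.factorial_succ (2*b+1), Nat.factorial_succ b]
  rw [div_eq_one_iff_eq (Nat.cast_ne_zero.mpr (by positivity))]
  push_cast [Nat.factorial]
  ring

lemma L2 (k : ℕ) : w (2*k+1+2) (k+1)
    = (((4*(2*(2*k+1)+1)*(2*(2*k+1)+3) : ℕ) : ℂ))⁻¹ * w (2*k+1) k := by
  rw [w, if_pos (by omega), w, if_pos (by omega)]
  rw [show 4*(2*(2*k+1)+1)*(2*(2*k+1)+3) = 4*(4*k+3)*(4*k+5) from by ring]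
  rw [show 2*(2*k+1+2)-2*(k+1)-1 = 2*k+1+1+1 from by omega]
  rw [show 2*k+1+2-2*(k+1)-1 = 0 from by omega]
  rw [show 2*(2*k+1)-2*k-1 = 2*k+1 from by omega]
  rw [show 2*k+1-2*k-1 = 0 from by omega]
  rw [show 2*(2*k+1+2) = 4*k+2+1+1+1+1 from by omega]
  rw [show 2*(2*k+1) = 4*k+2 from by omega]
  rw [show 2*(k+1)+1 = 2*k+1+1+1 from by omega]
  rw [show 2*k+1+2 = 2*k+1+1+1 from by omega]
  rw [Nat.factorial_succ (4*k+2+1+1+1), Nat.factorial_succ (4*k+2+1+1),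
      Nat.factorial_succ (4*k+2+1), Nat.factorial_succ (4*k+2),
      Nat.factorial_succ (2*k+1+1), Nat.factorial_succ (2*k+1)]
  rw [inv_mul_eq_div, div_div]
  rw [div_eq_div_iff (Nat.cast_ne_zero.mpr (by positivity))
      (mul_ne_zero (Nat.cast_ne_zero.mpr (by positivity))
        (Nat.cast_ne_zero.mpr (by positivity)))]
  push_cast [Nat.factorial_zero]
  ring

lemma L3 (k b : ℕ) : w (2*k+2+b+2) (k+1)
    = w (2*k+2+b+1) (k+1)
      + (((4*(2*(2*k+2+b)+1)*(2*(2*k+2+b)+3) : ℕ) : ℂ))⁻¹ * w (2*k+2+b) k := by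
  rw [w, if_pos (by omega), w, if_pos (by omega), w, if_pos (by omega)]
  rw [show 4*(2*(2*k+2+b)+1)*(2*(2*k+2+b)+3) = 4*(4*k+2*b+5)*(4*k+2*b+7) from by ring]
  rw [show 2*(2*k+2+b+2)-2*(k+1)-1 = 2*k+2*b+3+1+1 from by omega]
  rw [show 2*k+2+b+2-2*(k+1)-1 = b+1 from by omega]
  rw [show 2*(2*k+2+b+1)-2*(k+1)-1 = 2*k+2*b+3 from by omega]
  rw [show 2*k+2+b+1-2*(k+1)-1 = b from by omega]
  rw [show 2*(2*k+2+b)-2*k-1 = 2*k+2*b+3 from by omega]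
  rw [show 2*k+2+b-2*k-1 = b+1 from by omega]
  rw [show 2*(2*k+2+b+2) = 4*k+2*b+4+1+1+1+1 from by omega]
  rw [show 2*(2*k+2+b+1) = 4*k+2*b+4+1+1 from by omega]
  rw [show 2*(2*k+2+b) = 4*k+2*b+4 from by omega]
  rw [show 2*(k+1)+1 = 2*k+1+1+1 from by omega]
  rw [show 2*k+2+b+2 = 2*k+2+b+1+1 from by omega]
  rw [Nat.factorial_succ (4*k+2*b+4+1+1+1), Nat.factorial_succ (4*k+2*b+4+1+1),
      Nat.factorial_succ (4*k+2*b+4+1), Nat.factorial_succ (4*k+2*b+4),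
      Nat.factorial_succ (2*k+2*b+3+1), Nat.factorial_succ (2*k+2*b+3),
      Nat.factorial_succ (2*k+2+b+1), Nat.factorial_succ (2*k+2+b),
      Nat.factorial_succ (2*k+1+1), Nat.factorial_succ (2*k+1),
      Nat.factorial_succ b]
  rw [inv_mul_eq_div, div_div, div_add_div _ _
      (Nat.cast_ne_zero.mpr (by positivity))
      (mul_ne_zero (Nat.cast_ne_zero.mpr (by positivity))
        (Nat.cast_ne_zero.mpr (by positivity)))]
  rw [div_eq_div_iff (Nat.cast_ne_zero.mpr (by positivity))
      (mul_ne_zero (Nat.cast_ne_zero.mpr (by positivity))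
        (mul_ne_zero (Nat.cast_ne_zero.mpr (by positivity))
          (Nat.cast_ne_zero.mpr (by positivity))))]
  push_cast
  ring

lemma coeff_W (q : ℕ) : ∀ k, (W q).coeff k = w q k := by
  induction q using Nat.twoStepInduction with
  | zero => intro k; rw [w, if_neg (by omega)]; simp [W]
  | one =>
    intro k
    match k with
    | 0 => rw [show w 1 0 = w (0+1) 0 from rfl, w_zero]; simp [W]
    | (k+1) => rw [w, if_neg (by omega)]; simp [W, coeff_one]
  | more n ih1 ih2 =>
    intro k
    rw [W, coeff_add, mul_assoc, coeff_C_mul]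
    match k with
    | 0 =>
      rw [Polynomial.mul_coeff_zero, coeff_X_zero, zero_mul, mul_zero, add_zero]
      rw [ih2 0, show w (n+1) 0 = 1 from w_zero n,
          show w (n+2) 0 = 1 from w_zero (n+1)]
    | (k+1) =>
      rw [coeff_X_mul, ih2, ih1]
      rcases show 2*k+2 ≤ n ∨ n = 2*k+1 ∨ n ≤ 2*k from by omega with h | h | h
      · obtain ⟨b, rfl⟩ : ∃ b, n = 2*k+2+b := ⟨n-(2*k+2), by omega⟩
        exact (L3 k b).symm
      · subst h
        rw [show w (2*k+1+1) (k+1) = 0 from by rw [w, if_neg (by omega)], zero_add]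
        exact (L2 k).symm
      · rw [show w (n+1) (k+1) = 0 from by rw [w, if_neg (by omega)],
            show w n k = 0 from by rw [w, if_neg (by omega)],
            show w (n+2) (k+1) = 0 from by rw [w, if_neg (by omega)]]
        simp

lemma W_eq_sum (q : ℕ) : W q = ∑ k ∈ Finset.range (q+1), C (w q k) * X ^ k := by
  ext n
  rw [coeff_W, finset_sum_coeff]
  simp only [coeff_C_mul, coeff_X_pow, mul_ite, mul_one, mul_zero]
  rw [Finset.sum_ite_eq (Finset.range (q+1)) n (fun k => w q k)]
  split
  · rfl
  · next h =>
    rw [w, if_neg (by simp [Finset.mem_range] at h; omega)]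

lemma cW_ne (n : ℕ) : (((4*(2*n+1)*(2*n+3) : ℕ) : ℂ))⁻¹ ≠ 0 := by
  apply inv_ne_zero
  exact Nat.cast_ne_zero.mpr (by positivity)

lemma W_conj (q : ℕ) (z : ℂ) :
    (W q).eval ((starRingEnd ℂ) z) = (starRingEnd ℂ) ((W q).eval z) := by
  induction q using Nat.twoStepInduction generalizing z with
  | zero => simp [W]
  | one => simp [W]
  | more n ih1 ih2 =>
    have hcc : (starRingEnd ℂ) (((4*(2*n+1)*(2*n+3) : ℕ) : ℂ))⁻¹
        = (((4*(2*n+1)*(2*n+3) : ℕ) : ℂ))⁻¹ := by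
      rw [map_inv₀, Complex.conj_natCast]
    rw [W]
    simp only [eval_add, eval_mul, eval_C, eval_X, map_add, map_mul, hcc, ih1, ih2]

lemma W_no_common_root : ∀ q, 1 ≤ q → ∀ x : ℂ, x ≠ 0 →
    (W q).eval x = 0 → (W (q+1)).eval x = 0 → False := by
  intro q hq
  induction q, hq using Nat.le_induction with
  | base => intro x hx h1 _; simp [W] at h1
  | succ q hq ih =>
    intro x hx h1 h2
    rw [show q+1+1 = q+2 from rfl, W] at h2
    simp only [eval_add, eval_mul, eval_C, eval_X, h1, zero_add] at h2
    have : (W q).eval x = 0 := by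
      rcases mul_eq_zero.mp h2 with h | h
      · rcases mul_eq_zero.mp h with h' | h'
        · exact absurd h' (cW_ne q)
        · exact absurd h' hx
      · exact h
    exact ih x hx this h1

lemma W_inv : ∀ p, 1 ≤ p → ∀ z : ℂ, 0 < z.re →
    (W (p+1)).eval (z^2) ≠ 0 ∧
      0 < (z * (W p).eval (z^2) / (W (p+1)).eval (z^2)).re := by
  intro p hp
  induction p, hp using Nat.le_induction with
  | base =>
    intro z hz
    have h2 : (W 2).eval (z^2) = 1 := by simp [W]
    have h1 : (W 1).eval (z^2) = 1 := by simp [W]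
    rw [h1, h2]
    simpa using hz
  | succ p hp ih =>
    intro z hz
    obtain ⟨hA, hγ⟩ := ih z hz
    set A : ℂ := (W (p+1)).eval (z^2) with hAdef
    set B : ℂ := (W p).eval (z^2) with hBdef
    set γ : ℂ := z * B / A with hγdef
    set c : ℂ := (((4*(2*p+1)*(2*p+3) : ℕ) : ℂ))⁻¹ with hcdef
    have hzne : z ≠ 0 := fun h => by simp [h] at hz
    have hγA : γ * A = z * B := div_mul_cancel₀ _ hA
    -- the recurrence at z^2
    have hrec : (W (p+2)).eval (z^2) = A * (1 + c * z * γ) := by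
      rw [W]
      simp only [eval_add, eval_mul, eval_C, eval_X, ← hAdef, ← hBdef, ← hcdef]
      have : z^2 * B = z * (γ * A) := by rw [hγA]; ring
      rw [mul_add, mul_one]
      rw [show A + c * z^2 * B = A + c * (z^2 * B) from by ring, this]
      ring
    set d : ℂ := 1 + c * z * γ with hddef
    -- c is a positive real
    have hcre : c = ((((4*(2*p+1)*(2*p+3) : ℕ) : ℝ))⁻¹ : ℝ) := by
      rw [hcdef]
      push_cast
      norm_num
    set r : ℝ := (((4*(2*p+1)*(2*p+3) : ℕ) : ℝ))⁻¹ with hrdef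
    have hrpos : 0 < r := by
      rw [hrdef]
      apply inv_pos.mpr
      exact_mod_cast Nat.pos_of_ne_zero (by positivity)
    -- Re (z * conj d) > 0
    have hkey : (z * (starRingEnd ℂ) d).re = z.re + r * Complex.normSq z * γ.re := by
      rw [hddef, hcre]
      simp only [map_add, map_mul, map_one]
      rw [show z * (1 + (starRingEnd ℂ) ((r:ℂ)) * (starRingEnd ℂ) z * (starRingEnd ℂ) γ)
          = z + (starRingEnd ℂ) ((r:ℂ)) * (z * (starRingEnd ℂ) z) * (starRingEnd ℂ) γ from by ring]
      rw [Complex.mul_conj, Complex.conj_ofReal]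
      simp [Complex.add_re, Complex.mul_re, Complex.ofReal_re, Complex.ofReal_im,
        Complex.conj_re, Complex.conj_im]
    have hkeypos : 0 < (z * (starRingEnd ℂ) d).re := by
      rw [hkey]
      have : 0 ≤ r * Complex.normSq z * γ.re :=
        mul_nonneg (mul_nonneg hrpos.le (Complex.normSq_nonneg z)) hγ.le
      linarith
    have hdne : d ≠ 0 := by
      intro h
      rw [h] at hkeypos
      simp at hkeypos
    constructor
    · rw [hrec]
      exact mul_ne_zero hA hdne
    · have : z * A / (W (p+2)).eval (z^2) = z / d := by
        rw [hrec]
        field_simp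
      rw [this, div_eq_mul_inv, Complex.inv_def, ← mul_assoc, Complex.mul_re]
      have h1 : 0 < (Complex.normSq d)⁻¹ := inv_pos.mpr (Complex.normSq_pos.mpr hdne)
      simp only [← Complex.ofReal_inv, Complex.ofReal_re, Complex.ofReal_im, mul_zero, sub_zero]
      exact mul_pos hkeypos h1

lemma comp_sq (q : ℕ) : (W q).comp (X^2 : Polynomial ℂ)
    = ∑ k ∈ Finset.range (q+1), C (w q k) * X^(2*k) := by
  rw [W_eq_sum q, Polynomial.comp, Polynomial.eval₂_finset_sum]
  refine Finset.sum_congr rfl fun k _ => ?_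
  rw [eval₂_mul, eval₂_C, eval₂_X_pow, ← pow_mul]


lemma fact_expand (x y : ℕ) (h : x = y + 1) : x.factorial = x * y.factorial := by
  subst h; rw [Nat.factorial_succ]

lemma I1 (m a : ℕ) :
    (((2*m+2+a).factorial * (2*m+2*a+2).factorial : ℕ) : ℂ) /
        (((4*m+2*a+3).factorial * (2*m+1).factorial * (a+1).factorial : ℕ) : ℂ)
      + (((2*m+1+a).factorial * (2*m+2*a+2).factorial : ℕ) : ℂ) /
        (((4*m+2*a+3).factorial * (2*m+1).factorial * a.factorial : ℕ) : ℂ)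
      = ((2 * (2*m+2+a).factorial * (2*m+2*a+3).factorial : ℕ) : ℂ) /
        (((4*m+2*a+4).factorial * (2*m+1).factorial * (a+1).factorial : ℕ) : ℂ) := by
  rw [fact_expand (2*m+2+a) (2*m+1+a) (by omega),
      fact_expand (2*m+2*a+3) (2*m+2*a+2) (by omega),
      fact_expand (4*m+2*a+4) (4*m+2*a+3) (by omega),
      fact_expand (a+1) a (by omega)]
  rw [div_add_div _ _ (Nat.cast_ne_zero.mpr (by positivity))
      (Nat.cast_ne_zero.mpr (by positivity))]
  rw [div_eq_div_iff (mul_ne_zero (Nat.cast_ne_zero.mpr (by positivity))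
      (Nat.cast_ne_zero.mpr (by positivity)))
      (Nat.cast_ne_zero.mpr (by positivity))]
  push_cast
  ring

lemma I2 (m : ℕ) :
    (((2*m+1).factorial * (2*m).factorial : ℕ) : ℂ) /
        (((4*m+1).factorial * (2*m+1).factorial * Nat.factorial 0 : ℕ) : ℂ)
      = ((2 * (2*m+1).factorial * (2*m+1).factorial : ℕ) : ℂ) /
        (((4*m+2).factorial * (2*m+1).factorial * Nat.factorial 0 : ℕ) : ℂ) := by
  rw [fact_expand (4*m+2) (4*m+1) (by omega),
      fact_expand (2*m+1) (2*m) (by omega)]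
  rw [div_eq_div_iff (Nat.cast_ne_zero.mpr (by positivity))
      (Nat.cast_ne_zero.mpr (by positivity))]
  push_cast [Nat.factorial_zero]
  ring

lemma I3 (m a : ℕ) :
    (((2*m+3+a).factorial * (2*m+2*a+3).factorial : ℕ) : ℂ) /
        (((4*m+2*a+5).factorial * (2*m+2).factorial * (a+1).factorial : ℕ) : ℂ)
      - (((2*m+2+a).factorial * (2*m+2*a+3).factorial : ℕ) : ℂ) /
        (((4*m+2*a+5).factorial * (2*m+2).factorial * a.factorial : ℕ) : ℂ)
      = (((8*m+4*a+10 : ℕ) : ℂ))⁻¹ *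
        (((2 * (2*m+2+a).factorial * (2*m+2*a+3).factorial : ℕ) : ℂ) /
          (((4*m+2*a+4).factorial * (2*m+1).factorial * (a+1).factorial : ℕ) : ℂ)) := by
  rw [fact_expand (2*m+3+a) (2*m+2+a) (by omega),
      fact_expand (4*m+2*a+5) (4*m+2*a+4) (by omega),
      fact_expand (2*m+2) (2*m+1) (by omega),
      fact_expand (a+1) a (by omega)]
  rw [inv_mul_eq_div, div_div]
  rw [div_sub_div _ _ (Nat.cast_ne_zero.mpr (by positivity))
      (Nat.cast_ne_zero.mpr (by positivity))]
  rw [div_eq_div_iff (mul_ne_zero (Nat.cast_ne_zero.mpr (by positivity))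
        (Nat.cast_ne_zero.mpr (by positivity)))
      (mul_ne_zero (Nat.cast_ne_zero.mpr (by positivity))
        (Nat.cast_ne_zero.mpr (by positivity)))]
  push_cast
  ring

lemma I4 (m : ℕ) :
    (((2*m+2).factorial * (2*m+1).factorial : ℕ) : ℂ) /
        (((4*m+3).factorial * (2*m+2).factorial * Nat.factorial 0 : ℕ) : ℂ)
      = (((8*m+6 : ℕ) : ℂ))⁻¹ *
        (((2 * (2*m+1).factorial * (2*m+1).factorial : ℕ) : ℂ) /
          (((4*m+2).factorial * (2*m+1).factorial * Nat.factorial 0 : ℕ) : ℂ)) := by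
  rw [fact_expand (4*m+3) (4*m+2) (by omega),
      fact_expand (2*m+2) (2*m+1) (by omega)]
  rw [inv_mul_eq_div, div_div]
  rw [div_eq_div_iff (Nat.cast_ne_zero.mpr (by positivity))
      (mul_ne_zero (Nat.cast_ne_zero.mpr (by positivity))
        (Nat.cast_ne_zero.mpr (by positivity)))]
  push_cast [Nat.factorial_zero]
  ring

lemma L0 (p : ℕ) :
    (((p+1).factorial * (2*p+1).factorial : ℕ) : ℂ) /
        (((2*p+1).factorial * Nat.factorial 0 * (p+1).factorial : ℕ) : ℂ)
      = ((p.factorial * (2*p+1).factorial : ℕ) : ℂ) /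
        (((2*p+1).factorial * Nat.factorial 0 * p.factorial : ℕ) : ℂ) := by
  rw [fact_expand (p+1) p (by omega)]
  rw [div_eq_div_iff (Nat.cast_ne_zero.mpr (by positivity))
      (Nat.cast_ne_zero.mpr (by positivity))]
  push_cast [Nat.factorial_zero]
  ring


lemma key (p : ℕ) : padeQ p - padeP p
    = C (((4*p+2 : ℕ) : ℂ))⁻¹ * X^2 * (W p).comp (X^2)
      - X * (W (p+1)).comp (X^2) := by
  rw [comp_sq, comp_sq, padeQ, padeP]
  rw [Finset.mul_sum, Finset.mul_sum]
  have hQ : ∀ (s : Finset ℕ) (f : ℕ → ℂ),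
      (∑ j ∈ s, C (f j) * (-X : Polynomial ℂ) ^ j)
        = ∑ j ∈ s, C ((-1)^j * f j) * X ^ j := by
    intro s f
    refine Finset.sum_congr rfl fun j _ => ?_
    rw [neg_pow, C_mul, map_pow, map_neg, map_one]
    ring
  rw [hQ]
  have h1 : ∀ k : ℕ, C (((4*p+2 : ℕ) : ℂ))⁻¹ * X^2 * (C (w p k) * X^(2*k))
      = C ((((4*p+2 : ℕ) : ℂ))⁻¹ * w p k) * X^(2*k+2) := by
    intro k; rw [C_mul]; ring
  have h2 : ∀ k : ℕ, (X : Polynomial ℂ) * (C (w (p+1) k) * X^(2*k))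
      = C (w (p+1) k) * X^(2*k+1) := by
    intro k; ring
  simp only [h1, h2]
  ext n
  simp only [coeff_sub, finset_sum_coeff, coeff_C_mul, coeff_X_pow, mul_ite, mul_one, mul_zero]
  rw [Finset.sum_ite_eq (Finset.range (p+2)) n, Finset.sum_ite_eq (Finset.range (p+1)) n]
  have mem_tac : ∀ q : ℕ, n ≤ q → n ∈ Finset.range (q+1) := fun q h =>
    Finset.mem_range.mpr (by omega)
  rcases Nat.even_or_odd n with ⟨m, hm⟩ | ⟨m, hm⟩
  · -- even
    rcases m with _ | m'
    · have hn : n = 0 := by omega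
      subst hn
      rw [show (∑ x ∈ Finset.range (p+1), if 0 = 2*x+2 then (((4*p+2 : ℕ) : ℂ))⁻¹ * w p x else 0)
            = 0 from Finset.sum_eq_zero fun k _ => if_neg (by omega)]
      rw [show (∑ x ∈ Finset.range (p+1+1), if 0 = 2*x+1 then w (p+1) x else 0)
            = 0 from Finset.sum_eq_zero fun k _ => if_neg (by omega)]
      rw [if_pos (Finset.mem_range.mpr (by omega)), if_pos (Finset.mem_range.mpr (by omega))]
      rw [pow_zero, one_mul, sub_zero]
      rw [show 2*p+1-0 = 2*p+1 from by omega, show p+1-0 = p+1 from by omega,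
          show p-0 = p from by omega]
      rw [sub_eq_zero]
      exact L0 p
    · have hn : n = 2*m'+2 := by omega
      subst hn
      rw [show (∑ x ∈ Finset.range (p+1+1), if 2*m'+2 = 2*x+1 then w (p+1) x else 0)
            = 0 from Finset.sum_eq_zero fun k _ => if_neg (by omega)]
      rw [show (∑ x ∈ Finset.range (p+1), if 2*m'+2 = 2*x+2 then (((4*p+2 : ℕ) : ℂ))⁻¹ * w p x else 0)
            = (((4*p+2 : ℕ) : ℂ))⁻¹ * w p m' from
          (Finset.sum_eq_single m' (fun b _ hb => if_neg (by omega))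
            (fun hnot => by
              rw [if_pos rfl, w, if_neg (by simp only [Finset.mem_range, not_lt] at hnot; omega)]
              simp)).trans (if_pos rfl)]
      rw [sub_zero]
      rcases show 2*m'+2 ≤ p ∨ 2*m'+2 = p+1 ∨ p+1 < 2*m'+2 from by omega with h | h | h
      · obtain ⟨a, rfl⟩ : ∃ a, p = 2*m'+2+a := ⟨p-(2*m'+2), by omega⟩
        rw [if_pos (Finset.mem_range.mpr (by omega)), if_pos (Finset.mem_range.mpr (by omega))]
        rw [Even.neg_one_pow ⟨m'+1, by omega⟩, one_mul]
        rw [w, if_pos (by omega)]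
        rw [show 2*(2*m'+2+a)+1-(2*m'+2) = 2*m'+2*a+3 from by omega,
            show 2*m'+2+a+1-(2*m'+2) = a+1 from by omega,
            show 2*m'+2+a-(2*m'+2) = a from by omega,
            show 2*m'+2+a+1 = 2*m'+3+a from by omega,
            show 2*(2*m'+2+a)+1 = 4*m'+2*a+5 from by omega,
            show 2*(2*m'+2+a)-2*m'-1 = 2*m'+2*a+3 from by omega,
            show 2*m'+2+a-2*m'-1 = a+1 from by omega,
            show 2*(2*m'+2+a) = 4*m'+2*a+4 from by omega,
            show 4*(2*m'+2+a)+2 = 8*m'+4*a+10 from by ring]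
        exact I3 m' a
      · obtain rfl : p = 2*m'+1 := by omega
        rw [if_pos (Finset.mem_range.mpr (by omega)), if_neg (by
          simp only [Finset.mem_range, not_lt]; omega)]
        rw [Even.neg_one_pow ⟨m'+1, by omega⟩, one_mul, sub_zero]
        rw [w, if_pos (by omega)]
        rw [show 2*(2*m'+1)+1-(2*m'+2) = 2*m'+1 from by omega,
            show 2*m'+1+1-(2*m'+2) = 0 from by omega,
            show 2*m'+1+1 = 2*m'+2 from by omega,
            show 2*(2*m'+1)+1 = 4*m'+3 from by omega,
            show 2*(2*m'+1)-2*m'-1 = 2*m'+1 from by omega,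
            show 2*m'+1-2*m'-1 = 0 from by omega,
            show 2*(2*m'+1) = 4*m'+2 from by omega,
            show 4*(2*m'+1)+2 = 8*m'+6 from by ring]
        exact I4 m'
      · rw [if_neg (by simp only [Finset.mem_range, not_lt]; omega),
            if_neg (by simp only [Finset.mem_range, not_lt]; omega)]
        rw [w, if_neg (by omega)]
        simp
  · -- odd
    subst hm
    rw [show (∑ x ∈ Finset.range (p+1), if 2*m+1 = 2*x+2 then (((4*p+2 : ℕ) : ℂ))⁻¹ * w p x else 0)
          = 0 from Finset.sum_eq_zero fun k _ => if_neg (by omega)]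
    rw [show (∑ x ∈ Finset.range (p+1+1), if 2*m+1 = 2*x+1 then w (p+1) x else 0)
          = w (p+1) m from
        (Finset.sum_eq_single m (fun b _ hb => if_neg (by omega))
          (fun hnot => by
            rw [if_pos rfl, w, if_neg (by simp only [Finset.mem_range, not_lt] at hnot; omega)])).trans
          (if_pos rfl)]
    rw [zero_sub]
    rcases show 2*m+1 ≤ p ∨ 2*m+1 = p+1 ∨ p+1 < 2*m+1 from by omega with h | h | h
    · obtain ⟨a, rfl⟩ : ∃ a, p = 2*m+1+a := ⟨p-(2*m+1), by omega⟩
      rw [if_pos (Finset.mem_range.mpr (by omega)), if_pos (Finset.mem_range.mpr (by omega))]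
      rw [Odd.neg_one_pow ⟨m, by omega⟩]
      rw [w, if_pos (by omega)]
      rw [show 2*(2*m+1+a)+1-(2*m+1) = 2*m+2*a+2 from by omega,
          show 2*m+1+a+1-(2*m+1) = a+1 from by omega,
          show 2*m+1+a-(2*m+1) = a from by omega,
          show 2*m+1+a+1 = 2*m+2+a from by omega,
          show 2*(2*m+1+a)+1 = 4*m+2*a+3 from by omega,
          show 2*(2*m+2+a)-2*m-1 = 2*m+2*a+3 from by omega,
          show 2*m+2+a-2*m-1 = a+1 from by omega,
          show 2*(2*m+2+a) = 4*m+2*a+4 from by omega]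
      linear_combination -(I1 m a)
    · obtain rfl : p = 2*m := by omega
      rw [if_pos (Finset.mem_range.mpr (by omega)), if_neg (by
        simp only [Finset.mem_range, not_lt]; omega)]
      rw [Odd.neg_one_pow ⟨m, by omega⟩, sub_zero]
      rw [w, if_pos (by omega)]
      rw [show 2*(2*m)+1-(2*m+1) = 2*m from by omega,
          show 2*m+1-(2*m+1) = 0 from by omega,
          show 2*m+1 -2*m-1 = 0 from by omega,
          show 2*(2*m)+1 = 4*m+1 from by omega,
          show 2*(2*m+1)-2*m-1 = 2*m+1 from by omega,
          show 2*(2*m+1) = 4*m+2 from by omega]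
      linear_combination -(I2 m)
    · rw [if_neg (by simp only [Finset.mem_range, not_lt]; omega),
          if_neg (by simp only [Finset.mem_range, not_lt]; omega)]
      rw [w, if_neg (by omega)]
      simp

end PadeAux

open PadeAux in
/-- `Q - P` has a simple root at `0` and its remaining `p` roots all have positive real part. -/
theorem padeQ_sub_padeP_roots (p : ℕ) :
    (padeQ p - padeP p).rootMultiplicity 0 = 1 ∧
      ∀ z : ℂ, (padeQ p - padeP p).IsRoot z → z ≠ 0 → 0 < z.re := by
  have hW1 : (W (p+1)).eval 0 = 1 := by
    rw [← Polynomial.coeff_zero_eq_eval_zero, coeff_W, w_zero]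
  set c : ℂ := (((4*p+2 : ℕ) : ℂ))⁻¹ with hcdef
  have hfkey := key p
  set B₀ : Polynomial ℂ := C c * X * (W p).comp (X^2) - (W (p+1)).comp (X^2) with hB₀
  have hfact : padeQ p - padeP p = X * B₀ := by
    rw [hfkey, hB₀]; ring
  have hB₀eval : B₀.eval 0 = -1 := by
    rw [hB₀]
    simp only [eval_sub, eval_mul, eval_C, eval_X, eval_comp, eval_pow]
    norm_num [hW1]
  constructor
  · -- root multiplicity
    have hB₀ne : B₀ ≠ 0 := fun h => by simp [h] at hB₀eval
    have hfne : X * B₀ ≠ 0 := mul_ne_zero X_ne_zero hB₀ne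
    rw [hfact, Polynomial.rootMultiplicity_mul hfne]
    have h1 : rootMultiplicity 0 (X : Polynomial ℂ) = 1 := by
      have : (X : Polynomial ℂ) = X - C 0 := by simp
      rw [this, Polynomial.rootMultiplicity_X_sub_C_self]
    have h2 : rootMultiplicity 0 B₀ = 0 :=
      Polynomial.rootMultiplicity_eq_zero (by simp [Polynomial.IsRoot, hB₀eval])
    rw [h1, h2]
  · -- location of nonzero roots
    intro z hroot hz
    have heval : c * z^2 * (W p).eval (z^2) - z * (W (p+1)).eval (z^2) = 0 := by
      have := hroot
      rw [Polynomial.IsRoot, hfkey] at this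
      simpa only [eval_sub, eval_mul, eval_C, eval_X, eval_pow, eval_comp] using this
    by_contra hre
    push_neg at hre
    rcases lt_or_eq_of_le hre with hlt | heq
    · -- Re z < 0
      set ζ : ℂ := -z with hζdef
      have hζre : 0 < ζ.re := by simp [hζdef]; linarith
      have hzsq : z^2 = ζ^2 := by rw [hζdef]; ring
      rcases Nat.eq_zero_or_pos p with rfl | hp
      · rw [show W 0 = 0 from by simp [W]] at heval
        simp only [eval_zero, mul_zero, zero_sub, neg_eq_zero, mul_eq_zero] at heval
        rcases heval with h | h
        · exact hz h
        · rw [show W (0+1) = 1 from by simp [W]] at h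
          simp at h
      · obtain ⟨hA, hγ⟩ := W_inv p hp ζ hζre
        rw [hzsq] at heval
        have hζne : ζ ≠ 0 := fun h => by simp [h] at hζre
        have hAdd : (W (p+1)).eval (ζ^2) + c * ζ * (W p).eval (ζ^2) = 0 := by
          have : ζ * ((W (p+1)).eval (ζ^2) + c * ζ * (W p).eval (ζ^2)) = 0 := by
            rw [hζdef] at heval ⊢
            linear_combination heval
          rcases mul_eq_zero.mp this with h | h
          · exact absurd h hζne
          · exact h
        have hone : (1 : ℂ) + c * (ζ * (W p).eval (ζ^2) / (W (p+1)).eval (ζ^2)) = 0 := by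
          have := hAdd
          field_simp at this ⊢
          linear_combination this
        have hrpos : (0:ℝ) < (((4*p+2 : ℕ) : ℝ))⁻¹ := by
          apply inv_pos.mpr
          exact_mod_cast Nat.pos_of_ne_zero (by omega)
        have hcr : c = Complex.ofReal ((((4*p+2 : ℕ) : ℝ))⁻¹) := by
          rw [hcdef, Complex.ofReal_inv]
          norm_num
        have : ((1 : ℂ) + c * (ζ * (W p).eval (ζ^2) / (W (p+1)).eval (ζ^2))).re > 0 := by
          rw [hcr]
          rw [Complex.add_re, Complex.re_ofReal_mul]
          have : 0 < (((4*p+2 : ℕ) : ℝ))⁻¹ * (ζ * (W p).eval (ζ^2) / (W (p+1)).eval (ζ^2)).re :=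
            mul_pos hrpos hγ
          simp only [Complex.one_re]
          linarith
        rw [hone] at this
        simp at this
    · -- Re z = 0
      have hconjz : (starRingEnd ℂ) z = -z := by
        apply Complex.ext <;> simp [heq]
      have hconjsq : (starRingEnd ℂ) (z^2) = z^2 := by
        rw [map_pow, hconjz]; ring
      have hA : (starRingEnd ℂ) ((W (p+1)).eval (z^2)) = (W (p+1)).eval (z^2) := by
        rw [← W_conj, hconjsq]
      have hB : (starRingEnd ℂ) ((W p).eval (z^2)) = (W p).eval (z^2) := by
        rw [← W_conj, hconjsq]
      have hcc : (starRingEnd ℂ) c = c := by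
        rw [hcdef, map_inv₀, Complex.conj_natCast]
      have heq1 : c * z * (W p).eval (z^2) = (W (p+1)).eval (z^2) := by
        have : z * (c * z * (W p).eval (z^2) - (W (p+1)).eval (z^2)) = 0 := by
          linear_combination heval
        rcases mul_eq_zero.mp this with h | h
        · exact absurd h hz
        · linear_combination h
      have heq2 : -(c * z * (W p).eval (z^2)) = (W (p+1)).eval (z^2) := by
        have := congrArg (starRingEnd ℂ) heq1
        simp only [map_mul, hcc, hconjz, hB, hA] at this
        linear_combination this
      have hAzero : (W (p+1)).eval (z^2) = 0 := by
        have : (2 : ℂ) * (W (p+1)).eval (z^2) = 0 := by linear_combination - heq1 - heq2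
        simpa using this
      have hBzero : (W p).eval (z^2) = 0 := by
        rw [hAzero] at heq1
        have hcne : c ≠ 0 := by
          rw [hcdef]
          exact inv_ne_zero (Nat.cast_ne_zero.mpr (by omega))
        rcases mul_eq_zero.mp heq1 with h | h
        · rcases mul_eq_zero.mp h with h' | h'
          · exact absurd h' hcne
          · exact absurd h' hz
        · exact h
      rcases Nat.eq_zero_or_pos p with rfl | hp
      · rw [show W (0+1) = 1 from by simp [W]] at hAzero
        simp at hAzero
      · exact W_no_common_root p hp (z^2) (pow_ne_zero 2 hz) hBzero hAzero
end
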